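/- Let F be a CDF on ℝ with finite mean (i.e., ∫₀¹ |F^{-1}(u)| du < ∞) and write F_m = H_m(F). Then for every p ∈ [1, ∞), lim_{m→∞} ‖F_m − F‖_p = 0, i.e., ∫_ℝ |F_m(x) − F(x)|^p dx → 0 as m → ∞. -/

import Mathlib

/-!
Write `q = F⁻¹` and `Q_m = I_m q` for the step function equal to `μ_{j:m}(F)` on
`((j - 1)/m, j/m]`. Under the uniform law on `(0, 1)`, `q` has distribution function `F` and `Q_m`
has distribution function `F_m`. Since `∫ |1{a ≤ x} - 1{b ≤ x}| dx = |a - b|`, Tonelli gives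
`‖F_m - F‖₁ ≤ ‖Q_m - q‖_{L¹(0,1)}`.

The operators `I_m` are contractions of `L¹(0, 1)` because the Beta densities `f_{B_{j:m}}` sum to
`m`. For continuous `g` they converge uniformly: for `u` in the `j`-th cell, the Beta(j, m-j+1) law
has its mean in that same cell and variance at most `1/m`, so Chebyshev's argument applies. Since
continuous functions are dense in `L¹`, `‖Q_m - q‖₁ → 0`. Finally `|F_m - F| ≤ 1`, so
`‖F_m - F‖_p^p ≤ ‖F_m - F‖₁`.
-/

open MeasureTheory Filter Set
open scoped BoundedContinuousFunction ProbabilityTheory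

noncomputable section

/-- Density of the Beta(j, m-j+1) distribution. -/
def betaDens (m j : ℕ) (u : ℝ) : ℝ :=
  (m : ℝ) * ((m - 1).choose (j - 1) : ℝ) * u ^ (j - 1) * (1 - u) ^ (m - j)

/-- Quantile function (left-continuous generalized inverse). -/
def quantile (G : ℝ → ℝ) (p : ℝ) : ℝ :=
  sInf {x : ℝ | p ≤ G x}

/-- `G` is a cumulative distribution function on ℝ. -/
structure IsCDF (G : ℝ → ℝ) : Prop where
  mono : Monotone G
  rightCont : ∀ x, ContinuousWithinAt G (Ici x) x
  tendsto_atBot : Tendsto G atBot (nhds 0)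
  tendsto_atTop : Tendsto G atTop (nhds 1)

/-- `G` has finite mean: its quantile function is integrable on (0,1). -/
def HasFiniteMean (G : ℝ → ℝ) : Prop :=
  IntegrableOn (fun u => quantile G u) (Ioo (0:ℝ) 1)

/-- Expected j-th order statistic from a sample of size m drawn from G. -/
def muOS (m j : ℕ) (G : ℝ → ℝ) : ℝ :=
  ∫ u in Ioo (0:ℝ) 1, quantile G u * betaDens m j u

/-- The Hoeffding CDF operator `H_m`. -/
def hoeffCDF (m : ℕ) (G : ℝ → ℝ) (x : ℝ) : ℝ :=
  (m : ℝ)⁻¹ * ∑ j ∈ Finset.Icc 1 m, if muOS m j G ≤ x then (1:ℝ) else 0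

/-- The quantile-Hoeffding operator `I_m`. -/
def quantHoeff (m : ℕ) (h : ℝ → ℝ) (u : ℝ) : ℝ :=
  ∑ j ∈ Finset.Icc 1 m,
    (∫ t in Ioo (0:ℝ) 1, h t * betaDens m j t) *
      (if u ∈ Ioc (((j : ℝ) - 1) / m) ((j : ℝ) / m) then (1:ℝ) else 0)

/-- Empirical CDF of the reals `x 0, ..., x (n-1)`. -/
def ecdf (n : ℕ) (x : ℕ → ℝ) (t : ℝ) : ℝ :=
  (n : ℝ)⁻¹ * ∑ i ∈ Finset.range n, if x i ≤ t then (1:ℝ) else 0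

/-- Empirical CDF of the random sample `X 0, ..., X (n-1)`. -/
def empCDF {Ω : Type*} (X : ℕ → Ω → ℝ) (n : ℕ) (ω : Ω) : ℝ → ℝ :=
  fun t => (n : ℝ)⁻¹ * ∑ i ∈ Finset.range n, if X i ω ≤ t then (1:ℝ) else 0


open scoped Nat in
theorem integral_pow_mul_one_sub_pow (a b : ℕ) :
    ∫ t in (0:ℝ)..1, t ^ a * (1 - t) ^ b = (a ! * b ! : ℝ) / (a + b + 1)! := by
  induction b generalizing a with
  | zero =>
    simp only [pow_zero, mul_one, integral_pow, one_pow, zero_pow (Nat.succ_ne_zero a), sub_zero,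
      Nat.factorial_zero, Nat.cast_one, add_zero, Nat.factorial_succ, Nat.cast_mul, Nat.cast_add]
    field_simp
  | succ b ih =>
    have hparts : ((a:ℝ) + 1) * ∫ t in (0:ℝ)..1, t ^ a * (1 - t) ^ (b + 1)
        = (b + 1) * ∫ t in (0:ℝ)..1, t ^ (a + 1) * (1 - t) ^ b := by
      have := intervalIntegral.integral_mul_deriv_eq_deriv_mul
        (a := 0) (b := 1) (u := fun t => (1 - t) ^ (b + 1)) (v := fun t => t ^ (a + 1))
        (u' := fun t => -((b + 1) * (1 - t) ^ b)) (v' := fun t => (a + 1) * t ^ a)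
        (fun t _ => by simpa using ((hasDerivAt_id t).const_sub 1).fun_pow (b + 1))
        (fun t _ => by simpa using hasDerivAt_pow (a + 1) t)
        (by apply Continuous.intervalIntegrable; fun_prop)
        (by apply Continuous.intervalIntegrable; fun_prop)
      simp only [sub_self, one_pow, mul_one, one_mul, zero_pow (Nat.succ_ne_zero _), sub_zero,
        zero_sub, neg_mul, intervalIntegral.integral_neg, neg_neg] at this
      rw [← intervalIntegral.integral_const_mul, ← intervalIntegral.integral_const_mul]
      convert this using 1 <;> congr 1 <;> funext t <;> ring
    rw [ih, show a + 1 + b + 1 = a + (b + 1) + 1 by omega, Nat.factorial_succ a] at hparts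
    rw [eq_div_iff (by positivity), Nat.factorial_succ b]
    push_cast at hparts ⊢
    field_simp at hparts ⊢
    linear_combination hparts

open scoped Nat in
theorem integral_pow_mul_betaDens {m j : ℕ} (hj : 1 ≤ j) (hjm : j ≤ m) (k : ℕ) :
    ∫ t in Ioo (0:ℝ) 1, t ^ k * betaDens m j t
      = (j.ascFactorial k : ℝ) / (m + 1).ascFactorial k := by
  obtain ⟨a, rfl⟩ : ∃ a, j = a + 1 := ⟨j - 1, by omega⟩
  obtain ⟨b, rfl⟩ : ∃ b, m = a + b + 1 := ⟨m - a - 1, by omega⟩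
  have hdens : ∀ t : ℝ, t ^ k * betaDens (a + b + 1) (a + 1) t
      = ((a + b + 1 : ℕ) * (a + b).choose a : ℝ) * (t ^ (a + k) * (1 - t) ^ b) := by
    intro t
    simp only [betaDens, Nat.add_sub_cancel, show a + b + 1 - (a + 1) = b by omega, pow_add]
    ring
  simp only [hdens]
  rw [integral_const_mul, ← integral_Ioc_eq_integral_Ioo,
    ← intervalIntegral.integral_of_le zero_le_one, integral_pow_mul_one_sub_pow, mul_div_assoc',
    div_eq_div_iff (by positivity) (by positivity)]
  have hchoose : ((a + b).choose a * a ! * b ! : ℝ) = (a + b)! := by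
    rw [Nat.choose_symm_add]; exact_mod_cast Nat.add_choose_mul_factorial_mul_factorial a b
  have hnum : (a ! * (a + 1).ascFactorial k : ℝ) = (a + k)! := by
    exact_mod_cast Nat.factorial_mul_ascFactorial a k
  have hden : ((a + b + 1)! * (a + b + 1 + 1).ascFactorial k : ℝ) = (a + k + b + 1)! := by
    rw [show a + k + b + 1 = a + b + 1 + k by omega]
    exact_mod_cast Nat.factorial_mul_ascFactorial (a + b + 1) k
  have hsucc : ((a + b + 1)! : ℝ) = (a + b + 1) * (a + b)! := by
    exact_mod_cast Nat.factorial_succ (a + b)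
  rw [← hnum, ← hden, hsucc, ← hchoose]
  push_cast
  ring

theorem integral_betaDens {m j : ℕ} (hj : 1 ≤ j) (hjm : j ≤ m) :
    ∫ t in Ioo (0:ℝ) 1, betaDens m j t = 1 := by
  simpa using integral_pow_mul_betaDens hj hjm 0

theorem integral_mul_betaDens {m j : ℕ} (hj : 1 ≤ j) (hjm : j ≤ m) :
    ∫ t in Ioo (0:ℝ) 1, t * betaDens m j t = j / (m + 1) := by
  simpa [Nat.ascFactorial] using integral_pow_mul_betaDens hj hjm 1

theorem integral_sq_mul_betaDens {m j : ℕ} (hj : 1 ≤ j) (hjm : j ≤ m) :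
    ∫ t in Ioo (0:ℝ) 1, t ^ 2 * betaDens m j t = j * (j + 1) / ((m + 1) * (m + 2)) := by
  rw [integral_pow_mul_betaDens hj hjm 2]
  simp [Nat.ascFactorial]
  ring

theorem continuous_betaDens (m j : ℕ) : Continuous (betaDens m j) := by
  unfold betaDens; fun_prop

theorem betaDens_nonneg (m j : ℕ) {t : ℝ} (ht : t ∈ Ioo (0:ℝ) 1) : 0 ≤ betaDens m j t := by
  have h0 : 0 ≤ t := ht.1.le
  have h1 : 0 ≤ 1 - t := by linarith [ht.2]
  unfold betaDens
  positivity

theorem sum_betaDens {m : ℕ} (hm : 1 ≤ m) (t : ℝ) :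
    ∑ j ∈ Finset.Icc 1 m, betaDens m j t = m := by
  obtain ⟨n, rfl⟩ : ∃ n, m = n + 1 := ⟨m - 1, by omega⟩
  have hbinom := add_pow t (1 - t) n
  rw [add_sub_cancel, one_pow] at hbinom
  have hterm : ∀ k ∈ Finset.range (n + 1), betaDens (n + 1) (1 + k) t
      = (n + 1) * (t ^ k * (1 - t) ^ (n - k) * n.choose k) := by
    intro k hk
    simp only [betaDens, Nat.cast_add_one, Nat.add_sub_cancel, add_tsub_cancel_left,
      show n + 1 - (1 + k) = n - k by omega]
    ring
  rw [← Finset.Ico_add_one_right_eq_Icc, Finset.sum_Ico_eq_sum_range, Nat.add_sub_cancel,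
    Finset.sum_congr rfl hterm, ← Finset.mul_sum, ← hbinom]
  push_cast
  ring

theorem MeasureTheory.IntegrableOn.mul_betaDens {f : ℝ → ℝ} (hf : IntegrableOn f (Ioo (0:ℝ) 1))
    (m j : ℕ) :
    IntegrableOn (fun t => f t * betaDens m j t) (Ioo (0:ℝ) 1) :=
  hf.mul_continuousOn_of_subset (continuous_betaDens m j).continuousOn measurableSet_Ioo
    isCompact_Icc Ioo_subset_Icc_self

theorem integral_sq_sub_mul_betaDens_le {m j : ℕ} (hj : 1 ≤ j) (hjm : j ≤ m) {u : ℝ}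
    (hu : u ∈ Ioc (((j : ℝ) - 1) / m) ((j : ℝ) / m)) :
    ∫ t in Ioo (0:ℝ) 1, (t - u) ^ 2 * betaDens m j t ≤ 2 / m := by
  have hint : ∀ k : ℕ, IntegrableOn (fun t => t ^ k * betaDens m j t) (Ioo (0:ℝ) 1) := fun k =>
    ((continuous_pow k).integrableOn_Icc.mono_set Ioo_subset_Icc_self).mul_betaDens m j
  have h2 := hint 2
  have h1 : IntegrableOn (fun t => 2 * u * (t ^ 1 * betaDens m j t)) (Ioo (0:ℝ) 1) :=
    (hint 1).const_mul _
  have h0 : IntegrableOn (fun t => u ^ 2 * (t ^ 0 * betaDens m j t)) (Ioo (0:ℝ) 1) :=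
    (hint 0).const_mul _
  have hexpand : ∫ t in Ioo (0:ℝ) 1, (t - u) ^ 2 * betaDens m j t
      = j * (j + 1) / ((m + 1) * (m + 2)) - 2 * u * (j / (m + 1)) + u ^ 2 :=
    calc ∫ t in Ioo (0:ℝ) 1, (t - u) ^ 2 * betaDens m j t
        = ∫ t in Ioo (0:ℝ) 1, (t ^ 2 * betaDens m j t - 2 * u * (t ^ 1 * betaDens m j t))
            + u ^ 2 * (t ^ 0 * betaDens m j t) := by
          congr 1; funext t; ring
      _ = _ := by
        rw [integral_add (h2.sub' h1) h0, integral_sub h2 h1, integral_const_mul,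
          integral_const_mul]
        simp only [pow_one, pow_zero, one_mul]
        rw [integral_sq_mul_betaDens hj hjm, integral_mul_betaDens hj hjm,
          integral_betaDens hj hjm, mul_one]
  have hm : (0:ℝ) < m := by exact_mod_cast hj.trans hjm
  have hj1 : (1:ℝ) ≤ j := by exact_mod_cast hj
  have hjm' : (j:ℝ) ≤ m := by exact_mod_cast hjm
  -- `j / (m + 1)` is the mean of Beta(j, m - j + 1); it lies in the same cell as `u`
  have hmean : |u - j / (m + 1)| ≤ 1 / m := by
    have hs1 : (j:ℝ) / (m + 1) ≤ j / m := div_le_div_of_nonneg_left (by positivity) hm (by linarith)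
    have hs2 : ((j:ℝ) - 1) / m ≤ j / (m + 1) := by
      rw [div_le_div_iff₀ hm (by positivity)]; nlinarith
    have hwidth : (j:ℝ) / m - (j - 1) / m = 1 / m := by ring
    rw [abs_le]
    constructor <;> linarith [hu.1, hu.2]
  have hvar : (j:ℝ) * (m + 1 - j) / ((m + 1) ^ 2 * (m + 2)) ≤ 1 / m := by
    have hprod : (j:ℝ) * (m + 1 - j) ≤ m * m := by nlinarith
    rw [div_le_div_iff₀ (by positivity) hm]
    nlinarith
  calc ∫ t in Ioo (0:ℝ) 1, (t - u) ^ 2 * betaDens m j t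
      = (u - j / (m + 1)) ^ 2 + j * (m + 1 - j) / ((m + 1) ^ 2 * (m + 2)) := by
        rw [hexpand]; field_simp; ring
    _ ≤ 1 / m + 1 / m := by
        gcongr
        calc (u - j / (m + 1)) ^ 2 = |u - j / (m + 1)| ^ 2 := (sq_abs _).symm
          _ ≤ (1 / (m:ℝ)) ^ 2 := pow_le_pow_left₀ (abs_nonneg _) hmean 2
          _ ≤ 1 / m := pow_le_of_le_one (by positivity)
              (div_le_one_of_le₀ (by exact_mod_cast hj.trans hjm) hm.le) two_ne_zero
    _ = 2 / m := by ring

def cellIndex (m : ℕ) (u : ℝ) : ℕ := ⌈(m : ℝ) * u⌉₊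

theorem cellIndex_mem_Icc {m : ℕ} (hm : 1 ≤ m) {u : ℝ} (hu : u ∈ Ioo (0:ℝ) 1) :
    cellIndex m u ∈ Finset.Icc 1 m := by
  have hm' : (1:ℝ) ≤ m := by exact_mod_cast hm
  refine Finset.mem_Icc.2 ⟨Nat.one_le_iff_ne_zero.2 ?_, Nat.ceil_le.2 ?_⟩
  · exact (Nat.ceil_pos.2 (by nlinarith [hu.1])).ne'
  · nlinarith [hu.2]

theorem mem_Ioc_iff_cellIndex_eq {m j : ℕ} (hm : 1 ≤ m) (hj : 1 ≤ j) {u : ℝ} :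
    u ∈ Ioc (((j : ℝ) - 1) / m) ((j : ℝ) / m) ↔ cellIndex m u = j := by
  have hm' : (0:ℝ) < m := by exact_mod_cast hm
  rw [cellIndex, Nat.ceil_eq_iff (by omega), Nat.cast_sub hj, mem_Ioc, div_lt_iff₀ hm',
    le_div_iff₀ hm', Nat.cast_one, mul_comm u]

theorem sum_mul_ite_mem_Ioc {m : ℕ} (hm : 1 ≤ m) {u : ℝ} (hu : u ∈ Ioo (0:ℝ) 1) (c : ℕ → ℝ) :
    ∑ j ∈ Finset.Icc 1 m, c j * (if u ∈ Ioc (((j : ℝ) - 1) / m) ((j : ℝ) / m) then 1 else 0)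
      = c (cellIndex m u) := by
  have hmem := cellIndex_mem_Icc hm hu
  rw [Finset.sum_eq_single_of_mem _ hmem]
  · rw [if_pos ((mem_Ioc_iff_cellIndex_eq hm (Finset.mem_Icc.1 hmem).1).2 rfl), mul_one]
  · intro j hj hne
    rw [if_neg fun h => hne ((mem_Ioc_iff_cellIndex_eq hm (Finset.mem_Icc.1 hj).1).1 h).symm,
      mul_zero]

theorem quantHoeff_eq_of_mem {m : ℕ} (hm : 1 ≤ m) {u : ℝ} (hu : u ∈ Ioo (0:ℝ) 1) (h : ℝ → ℝ) :
    quantHoeff m h u = ∫ t in Ioo (0:ℝ) 1, h t * betaDens m (cellIndex m u) t :=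
  sum_mul_ite_mem_Ioc hm hu _

theorem measurable_quantHoeff (m : ℕ) (h : ℝ → ℝ) : Measurable (quantHoeff m h) :=
  Finset.measurable_sum _ fun _ _ =>
    (Measurable.ite measurableSet_Ioc measurable_const measurable_const).const_mul _

theorem integrable_mul_ite_mem {α : Type*} [MeasurableSpace α] {μ : Measure α}
    [IsFiniteMeasure μ] (c : ℝ) {S : Set α} [DecidablePred (· ∈ S)] (hS : MeasurableSet S) :
    Integrable (fun u => c * if u ∈ S then 1 else 0) μ := by
  have hind : (fun u => c * if u ∈ S then 1 else 0) = S.indicator fun _ => c := by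
    funext u; simp [Set.indicator_apply]
  exact hind ▸ (integrable_const c).indicator hS

theorem integrableOn_quantHoeff (m : ℕ) (h : ℝ → ℝ) :
    IntegrableOn (quantHoeff m h) (Ioo (0:ℝ) 1) :=
  integrable_finsetSum _ fun _ _ => integrable_mul_ite_mem _ measurableSet_Ioc

theorem setIntegral_comp_cellIndex {m : ℕ} (hm : 1 ≤ m) (c : ℕ → ℝ) :
    ∫ u in Ioo (0:ℝ) 1, c (cellIndex m u) = (m : ℝ)⁻¹ * ∑ j ∈ Finset.Icc 1 m, c j := by
  have hm' : (0:ℝ) < m := by exact_mod_cast hm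
  rw [← setIntegral_congr_fun measurableSet_Ioo fun u hu => sum_mul_ite_mem_Ioc hm hu c,
    integral_finsetSum _ fun _ _ => integrable_mul_ite_mem _ measurableSet_Ioc, Finset.mul_sum]
  refine Finset.sum_congr rfl fun j hj => ?_
  obtain ⟨hj1, hjm⟩ := Finset.mem_Icc.1 hj
  have hcell : Ioc (((j : ℝ) - 1) / m) ((j : ℝ) / m) ⊆ Ioc 0 1 := by
    apply Ioc_subset_Ioc
    · exact div_nonneg (by simpa using hj1) hm'.le
    · exact div_le_one_of_le₀ (by exact_mod_cast hjm) hm'.le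
  have hind : ∀ u : ℝ, (if u ∈ Ioc (((j : ℝ) - 1) / m) ((j : ℝ) / m) then (1:ℝ) else 0)
      = (Ioc (((j : ℝ) - 1) / m) ((j : ℝ) / m)).indicator 1 u := fun u => by
    simp [Set.indicator_apply]
  simp_rw [hind]
  rw [integral_const_mul, ← integral_Ioc_eq_integral_Ioo,
    integral_indicator_one measurableSet_Ioc, measureReal_restrict_apply measurableSet_Ioc,
    inter_eq_left.2 hcell, Real.volume_real_Ioc_of_le (div_le_div_of_nonneg_right (by linarith) hm'.le)]
  field_simp
  ring

theorem quantHoeff_sub {m : ℕ} {f g : ℝ → ℝ} (hf : IntegrableOn f (Ioo (0:ℝ) 1))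
    (hg : IntegrableOn g (Ioo (0:ℝ) 1)) :
    quantHoeff m (f - g) = quantHoeff m f - quantHoeff m g := by
  funext u
  simp only [quantHoeff, Pi.sub_apply, ← Finset.sum_sub_distrib, ← sub_mul]
  refine Finset.sum_congr rfl fun j _ => ?_
  rw [← integral_sub (hf.mul_betaDens m j) (hg.mul_betaDens m j)]
  simp only [sub_mul]

theorem integral_abs_quantHoeff_le {m : ℕ} (hm : 1 ≤ m) {f : ℝ → ℝ}
    (hf : IntegrableOn f (Ioo (0:ℝ) 1)) :
    ∫ u in Ioo (0:ℝ) 1, |quantHoeff m f u| ≤ ∫ t in Ioo (0:ℝ) 1, |f t| := by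
  have hm' : (m : ℝ) ≠ 0 := by positivity
  have hcoef : ∀ j, |∫ t in Ioo (0:ℝ) 1, f t * betaDens m j t|
      ≤ ∫ t in Ioo (0:ℝ) 1, |f t| * betaDens m j t := fun j =>
    abs_integral_le_integral_abs.trans_eq <|
      setIntegral_congr_fun measurableSet_Ioo fun t ht => by
        rw [abs_mul, abs_of_nonneg (betaDens_nonneg m j ht)]
  calc ∫ u in Ioo (0:ℝ) 1, |quantHoeff m f u|
      = ∫ u in Ioo (0:ℝ) 1, |∫ t in Ioo (0:ℝ) 1, f t * betaDens m (cellIndex m u) t| :=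
        setIntegral_congr_fun measurableSet_Ioo fun u hu => by rw [quantHoeff_eq_of_mem hm hu]
    _ = (m : ℝ)⁻¹ * ∑ j ∈ Finset.Icc 1 m, |∫ t in Ioo (0:ℝ) 1, f t * betaDens m j t| :=
        setIntegral_comp_cellIndex hm fun j => |∫ t in Ioo (0:ℝ) 1, f t * betaDens m j t|
    _ ≤ (m : ℝ)⁻¹ * ∑ j ∈ Finset.Icc 1 m, ∫ t in Ioo (0:ℝ) 1, |f t| * betaDens m j t := by
        gcongr with j; exact hcoef j
    _ = ∫ t in Ioo (0:ℝ) 1, |f t| := by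
        rw [← integral_finsetSum _ fun j _ => IntegrableOn.mul_betaDens hf.abs m j]
        simp only [← Finset.mul_sum, sum_betaDens hm, integral_mul_const]
        field_simp

theorem abs_quantHoeff_sub_le {m : ℕ} (hm : 1 ≤ m) {g : ℝ → ℝ}
    (hg : IntegrableOn g (Ioo (0:ℝ) 1)) {u : ℝ} (hu : u ∈ Ioo (0:ℝ) 1) {a b : ℝ} (hb : 0 ≤ b)
    (hgu : ∀ t ∈ Ioo (0:ℝ) 1, |g t - g u| ≤ a + b * (t - u) ^ 2) :
    |quantHoeff m g u - g u| ≤ a + 2 * b / m := by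
  set j := cellIndex m u
  obtain ⟨hj, hjm⟩ := Finset.mem_Icc.1 (cellIndex_mem_Icc hm hu)
  have hdens : IntegrableOn (betaDens m j) (Ioo (0:ℝ) 1) :=
    (continuous_betaDens m j).integrableOn_Icc.mono_set Ioo_subset_Icc_self
  have hsq : IntegrableOn (fun t => (t - u) ^ 2 * betaDens m j t) (Ioo (0:ℝ) 1) :=
    ((continuous_id.sub continuous_const).pow 2).integrableOn_Icc.mono_set
      Ioo_subset_Icc_self |>.mul_betaDens m j
  have hint : IntegrableOn (fun t => (g t - g u) * betaDens m j t) (Ioo (0:ℝ) 1) := by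
    simp only [sub_mul]; exact (hg.mul_betaDens m j).sub' (hdens.const_mul (g u))
  have hdiff : quantHoeff m g u - g u = ∫ t in Ioo (0:ℝ) 1, (g t - g u) * betaDens m j t := by
    simp only [sub_mul]
    rw [integral_sub (hg.mul_betaDens m j) (hdens.const_mul (g u)), integral_const_mul,
      integral_betaDens hj hjm, mul_one, quantHoeff_eq_of_mem hm hu]
  calc |quantHoeff m g u - g u|
      ≤ ∫ t in Ioo (0:ℝ) 1, |(g t - g u) * betaDens m j t| :=
        hdiff ▸ abs_integral_le_integral_abs
    _ ≤ ∫ t in Ioo (0:ℝ) 1, a * betaDens m j t + b * ((t - u) ^ 2 * betaDens m j t) := by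
        refine setIntegral_mono_on ?_ ?_ measurableSet_Ioo fun t ht => ?_
        · exact hint.abs
        · exact (hdens.const_mul a).add (hsq.const_mul b)
        · rw [abs_mul, abs_of_nonneg (betaDens_nonneg m j ht)]
          nlinarith [hgu t ht, betaDens_nonneg m j ht]
    _ = a + b * ∫ t in Ioo (0:ℝ) 1, (t - u) ^ 2 * betaDens m j t := by
        rw [integral_add (hdens.const_mul a) (hsq.const_mul b), integral_const_mul,
          integral_const_mul, integral_betaDens hj hjm, mul_one]
    _ ≤ a + b * (2 / m) := by
        gcongr
        exact integral_sq_sub_mul_betaDens_le hj hjm ((mem_Ioc_iff_cellIndex_eq hm hj).2 rfl)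
    _ = a + 2 * b / m := by ring

theorem IsCompact.exists_abs_sub_le_add_mul_sq {K : Set ℝ} (hK : IsCompact K) {g : ℝ → ℝ}
    (hg : ContinuousOn g K) {ε : ℝ} (hε : 0 < ε) :
    ∃ C, 0 ≤ C ∧ ∀ s ∈ K, ∀ t ∈ K, |g s - g t| ≤ ε + C * (s - t) ^ 2 := by
  obtain ⟨M, hM⟩ := hK.exists_bound_of_continuousOn hg
  obtain ⟨δ, hδ, hclose⟩ :=
    Metric.uniformContinuousOn_iff.1 (hK.uniformContinuousOn_of_continuous hg) ε hε
  refine ⟨2 * |M| / δ ^ 2, by positivity, fun s hs t ht => ?_⟩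
  have hC : 0 ≤ 2 * |M| / δ ^ 2 * (s - t) ^ 2 := by positivity
  by_cases hst : |s - t| < δ
  · have := hclose s hs t ht hst
    rw [Real.dist_eq] at this
    linarith
  · have hbound : |g s - g t| ≤ 2 * |M| := by
      have := (hM s hs).trans (le_abs_self M)
      have := (hM t ht).trans (le_abs_self M)
      rw [Real.norm_eq_abs] at *
      linarith [abs_sub (g s) (g t)]
    have hδst : δ ^ 2 ≤ (s - t) ^ 2 := by
      rw [← sq_abs (s - t)]; exact pow_le_pow_left₀ hδ.le (not_lt.1 hst) 2
    have hfar : 2 * |M| ≤ 2 * |M| / δ ^ 2 * (s - t) ^ 2 := by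
      rw [div_mul_eq_mul_div, le_div_iff₀ (by positivity)]
      exact mul_le_mul_of_nonneg_left hδst (by positivity)
    linarith

theorem tendstoUniformlyOn_quantHoeff {g : ℝ → ℝ} (hg : ContinuousOn g (Icc (0:ℝ) 1)) :
    TendstoUniformlyOn (fun m => quantHoeff m g) g atTop (Ioo (0:ℝ) 1) := by
  rw [Metric.tendstoUniformlyOn_iff]
  intro ε hε
  obtain ⟨C, hC0, hC⟩ := isCompact_Icc.exists_abs_sub_le_add_mul_sq hg (half_pos hε)
  have hlim : Tendsto (fun m : ℕ => ε / 2 + 2 * C / m) atTop (nhds (ε / 2 + 0)) :=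
    tendsto_const_nhds.add (tendsto_const_div_atTop_nhds_zero_nat _)
  filter_upwards [eventually_ge_atTop 1,
    hlim.eventually (gt_mem_nhds (by linarith : ε / 2 + 0 < ε))] with m hm hmε u hu
  rw [dist_comm, Real.dist_eq]
  exact (abs_quantHoeff_sub_le hm (hg.integrableOn_Icc.mono_set Ioo_subset_Icc_self) hu hC0
    fun t ht => hC t (Ioo_subset_Icc_self ht) u (Ioo_subset_Icc_self hu)).trans_lt hmε

theorem integral_abs_quantHoeff_sub_le {m : ℕ} (hm : 1 ≤ m) {f g : ℝ → ℝ}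
    (hf : IntegrableOn f (Ioo (0:ℝ) 1)) (hg : IntegrableOn g (Ioo (0:ℝ) 1)) :
    ∫ u in Ioo (0:ℝ) 1, |quantHoeff m f u - f u|
      ≤ 2 * (∫ u in Ioo (0:ℝ) 1, |f u - g u|)
        + ∫ u in Ioo (0:ℝ) 1, |quantHoeff m g u - g u| := by
  have hfg : IntegrableOn (f - g) (Ioo (0:ℝ) 1) := hf.sub hg
  have h1 : IntegrableOn (fun u => |quantHoeff m (f - g) u|) (Ioo (0:ℝ) 1) :=
    (integrableOn_quantHoeff m (f - g)).abs
  have h2 : IntegrableOn (fun u => |quantHoeff m g u - g u|) (Ioo (0:ℝ) 1) :=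
    ((integrableOn_quantHoeff m g).sub' hg).abs
  have h3 : IntegrableOn (fun u => |(f - g) u|) (Ioo (0:ℝ) 1) := hfg.abs
  calc ∫ u in Ioo (0:ℝ) 1, |quantHoeff m f u - f u|
      ≤ ∫ u in Ioo (0:ℝ) 1,
          |quantHoeff m (f - g) u| + |quantHoeff m g u - g u| + |(f - g) u| := by
        refine integral_mono ((integrableOn_quantHoeff m f).sub' hf).abs
          ((h1.fun_add h2).fun_add h3) fun u => ?_
        have hsplit : quantHoeff m f u - f u
            = quantHoeff m (f - g) u + (quantHoeff m g u - g u) - (f - g) u := by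
          rw [quantHoeff_sub hf hg]; simp only [Pi.sub_apply]; ring
        rw [hsplit]
        exact (abs_sub _ _).trans (add_le_add_left (abs_add_le _ _) _)
    _ = (∫ u in Ioo (0:ℝ) 1, |quantHoeff m (f - g) u|)
          + (∫ u in Ioo (0:ℝ) 1, |quantHoeff m g u - g u|)
          + ∫ u in Ioo (0:ℝ) 1, |(f - g) u| := by
        rw [integral_add (h1.fun_add h2) h3, integral_add h1 h2]
    _ ≤ 2 * (∫ u in Ioo (0:ℝ) 1, |f u - g u|)
          + ∫ u in Ioo (0:ℝ) 1, |quantHoeff m g u - g u| := by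
        have := integral_abs_quantHoeff_le hm hfg
        simp only [Pi.sub_apply] at this ⊢
        linarith

theorem tendsto_integral_abs_quantHoeff_sub {f : ℝ → ℝ} (hf : IntegrableOn f (Ioo (0:ℝ) 1)) :
    Tendsto (fun m => ∫ u in Ioo (0:ℝ) 1, |quantHoeff m f u - f u|) atTop (nhds 0) := by
  refine tendsto_order.2 ⟨fun a ha => Eventually.of_forall fun m =>
    ha.trans_le (integral_nonneg fun u => abs_nonneg _), fun ε hε => ?_⟩
  obtain ⟨g, hfg, hg⟩ :=
    Integrable.exists_boundedContinuous_integral_sub_le hf (by positivity : 0 < ε / 4)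
  filter_upwards [eventually_ge_atTop 1, Metric.tendstoUniformlyOn_iff.1
    (tendstoUniformlyOn_quantHoeff g.continuous.continuousOn) (ε / 4) (by positivity)]
    with m hm hclose
  have hgm : ∫ u in Ioo (0:ℝ) 1, |quantHoeff m g u - g u| ≤ ε / 4 :=
    calc ∫ u in Ioo (0:ℝ) 1, |quantHoeff m g u - g u|
        ≤ ∫ _ in Ioo (0:ℝ) 1, ε / 4 :=
          setIntegral_mono_on ((integrableOn_quantHoeff m g).sub'
            (g.continuous.integrableOn_Icc.mono_set Ioo_subset_Icc_self)).abs
            (integrableOn_const measure_Ioo_lt_top.ne) measurableSet_Ioo fun u hu => by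
            rw [← Real.dist_eq, dist_comm]; exact (hclose u hu).le
      _ = ε / 4 := by simp
  calc ∫ u in Ioo (0:ℝ) 1, |quantHoeff m f u - f u|
      ≤ 2 * (∫ u in Ioo (0:ℝ) 1, |f u - g u|)
          + ∫ u in Ioo (0:ℝ) 1, |quantHoeff m g u - g u| :=
        integral_abs_quantHoeff_sub_le hm hf hg
    _ ≤ 2 * (ε / 4) + ε / 4 := by gcongr; exact hfg
    _ < ε := by linarith

instance : IsProbabilityMeasure (volume.restrict (Ioo (0:ℝ) 1)) := ⟨by simp⟩

namespace IsCDF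

variable {F : ℝ → ℝ}

theorem nonneg (hF : IsCDF F) (x : ℝ) : 0 ≤ F x :=
  le_of_tendsto hF.tendsto_atBot (eventually_atBot.2 ⟨x, fun _ hy => hF.mono hy⟩)

theorem le_one (hF : IsCDF F) (x : ℝ) : F x ≤ 1 :=
  ge_of_tendsto hF.tendsto_atTop (eventually_atTop.2 ⟨x, fun _ hy => hF.mono hy⟩)

theorem quantile_le_iff (hF : IsCDF F) {u x : ℝ} (hu : u ∈ Ioo (0:ℝ) 1) :
    quantile F u ≤ x ↔ u ≤ F x := by
  have hne : {y | u ≤ F y}.Nonempty :=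
    (hF.tendsto_atTop.eventually (eventually_ge_nhds hu.2)).exists
  obtain ⟨y₀, hy₀⟩ := (hF.tendsto_atBot.eventually (eventually_lt_nhds hu.1)).exists
  have hbdd : BddBelow {y | u ≤ F y} :=
    ⟨y₀, fun y hy => le_of_not_gt fun hlt => (hy.trans (hF.mono hlt.le)).not_gt hy₀⟩
  -- right continuity makes the infimum itself belong to the set
  have hmem : u ≤ F (quantile F u) := by
    refine ge_of_tendsto ((hF.rightCont _).mono_left (nhdsWithin_mono _ Ioi_subset_Ici_self))
      (eventually_nhdsWithin_of_forall fun y hy => ?_)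
    obtain ⟨z, hz, hzy⟩ := exists_lt_of_csInf_lt hne hy
    exact hz.trans (hF.mono hzy.le)
  exact ⟨fun h => hmem.trans (hF.mono h), fun h => csInf_le hbdd h⟩

theorem measureReal_quantile_le (hF : IsCDF F) (x : ℝ) :
    (volume.restrict (Ioo (0:ℝ) 1)).real {u | quantile F u ≤ x} = F x := by
  have hset : {u | quantile F u ≤ x} ∩ Ioo 0 1 = Ioo 0 1 ∩ Iic (F x) := by
    ext u
    simp only [mem_inter_iff, mem_ofPred_eq, mem_Iic]
    exact ⟨fun ⟨h, hu⟩ => ⟨hu, (hF.quantile_le_iff hu).1 h⟩,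
      fun ⟨hu, h⟩ => ⟨(hF.quantile_le_iff hu).2 h, hu⟩⟩
  rw [measureReal_restrict_apply' measurableSet_Ioo, hset,
    measureReal_congr ((Ioo_ae_eq_Ioc (μ := volume)).inter (ae_eq_refl (Iic (F x)))), Ioc_inter_Iic,
    inf_eq_right.2 (hF.le_one x), Real.volume_real_Ioc_of_le (hF.nonneg x), sub_zero]

end IsCDF

theorem measureReal_quantHoeff_le {m : ℕ} (hm : 1 ≤ m) (h : ℝ → ℝ) (x : ℝ) :
    (volume.restrict (Ioo (0:ℝ) 1)).real {u | quantHoeff m h u ≤ x}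
      = (m : ℝ)⁻¹ * ∑ j ∈ Finset.Icc 1 m,
          if ∫ t in Ioo (0:ℝ) 1, h t * betaDens m j t ≤ x then 1 else 0 := by
  rw [← integral_indicator_one (measurableSet_le (measurable_quantHoeff m h) measurable_const),
    ← setIntegral_comp_cellIndex hm]
  refine setIntegral_congr_fun measurableSet_Ioo fun u hu => ?_
  simp only [Set.indicator_apply, mem_ofPred_eq, Pi.one_apply, quantHoeff_eq_of_mem hm hu]

theorem hoeffCDF_eq_measureReal {m : ℕ} (hm : 1 ≤ m) (F : ℝ → ℝ) (x : ℝ) :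
    hoeffCDF m F x = (volume.restrict (Ioo (0:ℝ) 1)).real {u | quantHoeff m (quantile F) u ≤ x} :=
  (measureReal_quantHoeff_le hm _ x).symm

theorem monotone_hoeffCDF (m : ℕ) (F : ℝ → ℝ) : Monotone (hoeffCDF m F) := fun x y hxy => by
  refine mul_le_mul_of_nonneg_left (Finset.sum_le_sum fun j _ => ?_) (by positivity)
  split_ifs with hx hy <;> norm_num
  exact hy (hx.trans hxy)

open scoped symmDiff

theorem Ici_symmDiff_Ici (a b : ℝ) : Ici a ∆ Ici b = Ico (min a b) (max a b) := by
  ext x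
  simp only [mem_symmDiff, mem_Ici, mem_Ico, min_le_iff, lt_max_iff]
  grind

section DistributionFunction

variable {α : Type*} [MeasurableSpace α] {μ : Measure α} [IsFiniteMeasure μ] {f g : α → ℝ}

theorem Measurable.lintegral_abs_measureReal_sub_le (hf : Measurable f) (hg : Measurable g) :
    ∫⁻ x, ENNReal.ofReal |μ.real {a | f a ≤ x} - μ.real {a | g a ≤ x}|
      ≤ ∫⁻ a, ENNReal.ofReal |f a - g a| ∂μ := by
  have hS : MeasurableSet ({p : ℝ × α | f p.2 ≤ p.1} ∆ {p | g p.2 ≤ p.1}) :=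
    (measurableSet_le (hf.comp measurable_snd) measurable_fst).symmDiff
      (measurableSet_le (hg.comp measurable_snd) measurable_fst)
  calc ∫⁻ x, ENNReal.ofReal |μ.real {a | f a ≤ x} - μ.real {a | g a ≤ x}|
      ≤ ∫⁻ x, μ ({a | f a ≤ x} ∆ {a | g a ≤ x}) := lintegral_mono fun x => by
        rw [← ofReal_measureReal]
        exact ENNReal.ofReal_le_ofReal (abs_measureReal_sub_le_measureReal_symmDiff
          (measurableSet_le hf measurable_const).nullMeasurableSet
          (measurableSet_le hg measurable_const).nullMeasurableSet)
    _ = (volume.prod μ) ({p : ℝ × α | f p.2 ≤ p.1} ∆ {p | g p.2 ≤ p.1}) :=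
        (Measure.prod_apply hS).symm
    _ = ∫⁻ a, volume (Ici (f a) ∆ Ici (g a)) ∂μ := Measure.prod_apply_symm hS
    _ = ∫⁻ a, ENNReal.ofReal |f a - g a| ∂μ := by
        simp only [Ici_symmDiff_Ici, Real.volume_Ico, max_sub_min_eq_abs']

theorem AEMeasurable.lintegral_abs_measureReal_sub_le (hf : AEMeasurable f μ)
    (hg : AEMeasurable g μ) :
    ∫⁻ x, ENNReal.ofReal |μ.real {a | f a ≤ x} - μ.real {a | g a ≤ x}|
      ≤ ∫⁻ a, ENNReal.ofReal |f a - g a| ∂μ := by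
  have hdistrib : ∀ {h : α → ℝ} (hh : AEMeasurable h μ) (x : ℝ),
      μ.real {a | h a ≤ x} = μ.real {a | hh.mk h a ≤ x} := fun hh x =>
    measureReal_congr (hh.ae_eq_mk.mono fun a ha => by change (_ ≤ x) = (_ ≤ x); rw [ha])
  simp only [hdistrib hf, hdistrib hg]
  calc _ ≤ ∫⁻ a, ENNReal.ofReal |hf.mk f a - hg.mk g a| ∂μ :=
        hf.measurable_mk.lintegral_abs_measureReal_sub_le hg.measurable_mk
    _ = ∫⁻ a, ENNReal.ofReal |f a - g a| ∂μ := lintegral_congr_ae <| by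
        filter_upwards [hf.ae_eq_mk, hg.ae_eq_mk] with a hfa hga
        rw [hfa, hga]

end DistributionFunction

theorem integral_rpow_abs_le_of_lintegral_le {α : Type*} [MeasurableSpace α] {μ : Measure α}
    {d : α → ℝ} (hd : AEStronglyMeasurable d μ) (hd1 : ∀ x, |d x| ≤ 1) {p : ℝ} (hp : 1 ≤ p)
    {c : ℝ} (hc : 0 ≤ c) (h : ∫⁻ x, ENNReal.ofReal |d x| ∂μ ≤ ENNReal.ofReal c) :
    ∫ x, |d x| ^ p ∂μ ≤ c := by
  have hmeas : AEStronglyMeasurable (fun x => |d x| ^ p) μ :=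
    ((Real.continuous_rpow_const (by linarith)).comp continuous_abs).comp_aestronglyMeasurable hd
  rw [integral_eq_lintegral_of_nonneg_ae (ae_of_all _ fun x => by positivity) hmeas]
  calc (∫⁻ x, ENNReal.ofReal (|d x| ^ p) ∂μ).toReal
      ≤ (∫⁻ x, ENNReal.ofReal |d x| ∂μ).toReal :=
        ENNReal.toReal_mono (ne_top_of_le_ne_top ENNReal.ofReal_ne_top h) <| lintegral_mono fun x =>
          ENNReal.ofReal_le_ofReal (Real.rpow_le_self_of_le_one (abs_nonneg _) (hd1 x) hp)
    _ ≤ (ENNReal.ofReal c).toReal := ENNReal.toReal_mono ENNReal.ofReal_ne_top h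
    _ = c := ENNReal.toReal_ofReal hc

theorem lintegral_abs_hoeffCDF_sub_le {F : ℝ → ℝ} (hF : IsCDF F)
    (hq : IntegrableOn (quantile F) (Ioo (0:ℝ) 1)) {m : ℕ} (hm : 1 ≤ m) :
    ∫⁻ x, ENNReal.ofReal |hoeffCDF m F x - F x|
      ≤ ENNReal.ofReal (∫ u in Ioo (0:ℝ) 1, |quantHoeff m (quantile F) u - quantile F u|) := by
  simp only [hoeffCDF_eq_measureReal hm, ← hF.measureReal_quantile_le]
  rw [ofReal_integral_eq_lintegral_ofReal ((integrableOn_quantHoeff m _).sub' hq).abs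
    (ae_of_all _ fun u => abs_nonneg _)]
  exact (measurable_quantHoeff m _).aemeasurable.lintegral_abs_measureReal_sub_le hq.aemeasurable

theorem integral_abs_hoeffCDF_sub_rpow_le {F : ℝ → ℝ} (hF : IsCDF F)
    (hq : IntegrableOn (quantile F) (Ioo (0:ℝ) 1)) {m : ℕ} (hm : 1 ≤ m) {p : ℝ} (hp : 1 ≤ p) :
    ∫ x, |hoeffCDF m F x - F x| ^ p
      ≤ ∫ u in Ioo (0:ℝ) 1, |quantHoeff m (quantile F) u - quantile F u| := by
  refine integral_rpow_abs_le_of_lintegral_le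
    ((monotone_hoeffCDF m F).measurable.sub hF.mono.measurable).aestronglyMeasurable (fun x => ?_)
    hp (integral_nonneg fun u => abs_nonneg _) (lintegral_abs_hoeffCDF_sub_le hF hq hm)
  rw [Pi.sub_apply, hoeffCDF_eq_measureReal hm, ← hF.measureReal_quantile_le]
  exact abs_sub_le_of_nonneg_of_le measureReal_nonneg measureReal_le_one measureReal_nonneg
    measureReal_le_one

/-- Deterministic `L^p` convergence of the Hoeffding CDF `F_m = H_m(F)` to `F`. -/
theorem hoeffCDF_tendsto_Lp
    (F : ℝ → ℝ) (hF : IsCDF F) (hFmean : HasFiniteMean F) (p : ℝ) (hp : 1 ≤ p) :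
    Tendsto (fun m : ℕ => ∫ x : ℝ, |hoeffCDF m F x - F x| ^ p) atTop (nhds 0) := by
  refine squeeze_zero' (Eventually.of_forall fun m => integral_nonneg fun x => by positivity)
    ?_ (tendsto_integral_abs_quantHoeff_sub hFmean)
  filter_upwards [eventually_ge_atTop 1] with m hm
  exact integral_abs_hoeffCDF_sub_rpow_le hF hFmean hm hp
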